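/- For every real ν, every natural number k, every x > 0 and every t > 0, the k-th iterate of the operator (1/x)·d/dx applied in the variable x to the function x ↦ S_ν(x,t)/x^ν equals (-1)^k · S_{ν+k}(x,t)/x^{ν+k}. -/

import Mathlib

/-!
Up to the factor `(1/2)^(ν+1)`, `S_ν(x,t)/x^ν` is the integral `J_ν(x) = ∫_0^t τ^{-(ν+1)} e^{-τ - x²/(4τ)} dτ`.
Differentiating under the integral sign gives `J_ν'(x) = -(x/2) J_{ν+1}(x)`, so `(1/x) d/dx` sends
`S_ν/x^ν` to `-S_{ν+1}/x^{ν+1}`, and the claim follows by induction on `k`. Differentiation under the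
integral is justified because `τ^{-r} e^{-c/τ}` stays bounded on `(0, t]` for every `c > 0`.
-/

open Real MeasureTheory

/-- The Shu function `S_ν(x,t) = (1/2)(x/2)^ν ∫_0^t τ^{-(ν+1)} e^{-τ - x²/(4τ)} dτ`. -/
noncomputable def shu (ν x t : ℝ) : ℝ :=
  (1/2) * (x/2) ^ ν * ∫ τ in (0:ℝ)..t, τ ^ (-(ν+1)) * Real.exp (-τ - x^2 / (4*τ))

open Set Metric
open scoped Nat

lemma rpow_neg_mul_exp_neg_div_le (r : ℝ) {c t τ : ℝ} (hc : 0 < c) (hτ : 0 < τ) (hτt : τ ≤ t) :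
    τ ^ (-r) * exp (-(c / τ)) ≤ (⌈r⌉₊ ! / c ^ ⌈r⌉₊ : ℝ) * t ^ ((⌈r⌉₊ : ℝ) - r) := by
  set n := ⌈r⌉₊
  have hexp : exp (-(c / τ)) ≤ n ! / c ^ n * τ ^ n := by
    rw [exp_neg, inv_le_comm₀ (exp_pos _) (by positivity)]
    calc (n ! / c ^ n * τ ^ n)⁻¹ = (c / τ) ^ n / n ! := by rw [div_pow]; field_simp
      _ ≤ exp (c / τ) := pow_div_factorial_le_exp _ (by positivity) n
  have hpow : τ ^ (-r) * τ ^ n = τ ^ ((n : ℝ) - r) := by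
    rw [← rpow_natCast, ← rpow_add hτ, neg_add_eq_sub]
  calc τ ^ (-r) * exp (-(c / τ)) ≤ τ ^ (-r) * (n ! / c ^ n * τ ^ n) := by gcongr
    _ = n ! / c ^ n * τ ^ ((n : ℝ) - r) := by rw [← hpow]; ring
    _ ≤ n ! / c ^ n * t ^ ((n : ℝ) - r) := by
      gcongr
      exact sub_nonneg.2 (Nat.le_ceil r)

noncomputable def shuKernel (s x τ : ℝ) : ℝ :=
  τ ^ (-(s + 1)) * exp (-τ - x ^ 2 / (4 * τ))

lemma shuKernel_nonneg (s x : ℝ) {τ : ℝ} (hτ : 0 < τ) : 0 ≤ shuKernel s x τ := by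
  unfold shuKernel; positivity

lemma continuousOn_shuKernel (s x : ℝ) : ContinuousOn (shuKernel s x) (Ioi 0) := by
  intro τ hτ
  have hτ₀ : τ ≠ 0 := ne_of_gt hτ
  refine ContinuousAt.continuousWithinAt ?_
  unfold shuKernel
  fun_prop (disch := simp [hτ₀])

lemma exists_shuKernel_le (s : ℝ) {a : ℝ} (ha : 0 < a) (t : ℝ) :
    ∃ C, ∀ x τ, a ≤ |x| → τ ∈ Ioc 0 t → shuKernel s x τ ≤ C := by
  refine ⟨⌈s + 1⌉₊ ! / (a ^ 2 / 4) ^ ⌈s + 1⌉₊ * t ^ ((⌈s + 1⌉₊ : ℝ) - (s + 1)),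
    fun x τ hx hτ => ?_⟩
  have hτ₀ := hτ.1
  have hax : a ^ 2 / (4 * τ) ≤ x ^ 2 / (4 * τ) := by
    rw [← sq_abs x]; gcongr
  calc shuKernel s x τ ≤ τ ^ (-(s + 1)) * exp (-((a ^ 2 / 4) / τ)) := by
        unfold shuKernel; rw [div_div]; gcongr; linarith
    _ ≤ _ := rpow_neg_mul_exp_neg_div_le (s + 1) (by positivity) hτ₀ hτ.2

lemma intervalIntegrable_shuKernel (s : ℝ) {x t : ℝ} (hx : x ≠ 0) (ht : 0 ≤ t) :
    IntervalIntegrable (shuKernel s x) volume 0 t := by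
  obtain ⟨C, hC⟩ := exists_shuKernel_le s (abs_pos.2 hx) t
  rw [intervalIntegrable_iff_integrableOn_Ioc_of_le ht]
  refine IntegrableOn.of_bound measure_Ioc_lt_top
    ((continuousOn_shuKernel s x).mono Ioc_subset_Ioi_self |>.aestronglyMeasurable
      measurableSet_Ioc) C ?_
  filter_upwards [self_mem_ae_restrict measurableSet_Ioc] with τ hτ
  rw [norm_of_nonneg (shuKernel_nonneg s x hτ.1)]
  exact hC x τ le_rfl hτ

lemma hasDerivAt_shuKernel (s : ℝ) {τ : ℝ} (hτ : τ ≠ 0) (x : ℝ) :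
    HasDerivAt (fun y => shuKernel s y τ) (-(x / 2) * shuKernel (s + 1) x τ) x := by
  have hexp : HasDerivAt (fun y => exp (-τ - y ^ 2 / (4 * τ)))
      (exp (-τ - x ^ 2 / (4 * τ)) * -(2 * x / (4 * τ))) x := by
    simpa using (((hasDerivAt_pow 2 x).div_const (4 * τ)).const_sub (-τ)).exp
  refine (hexp.const_mul (τ ^ (-(s + 1)))).congr_deriv ?_
  simp only [shuKernel]
  rw [show -(s + 1 + 1) = -(s + 1) - 1 by ring, rpow_sub_one hτ]
  field_simp
  ring

lemma hasDerivAt_integral_shuKernel (s : ℝ) {x t : ℝ} (hx : x ≠ 0) (ht : 0 ≤ t) :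
    HasDerivAt (fun y => ∫ τ in (0:ℝ)..t, shuKernel s y τ)
      (-(x / 2) * ∫ τ in (0:ℝ)..t, shuKernel (s + 1) x τ) x := by
  have hball : ball x (|x| / 2) ∈ nhds x := ball_mem_nhds x (half_pos (abs_pos.2 hx))
  have hIoc : uIoc (0:ℝ) t = Ioc 0 t := uIoc_of_le ht
  obtain ⟨C, hC⟩ := exists_shuKernel_le (s + 1) (half_pos (abs_pos.2 hx)) t
  have habs {y : ℝ} (hy : y ∈ ball x (|x| / 2)) : |x| / 2 ≤ |y| ∧ |y| ≤ 3 * |x| / 2 := by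
    rw [mem_ball, dist_eq_norm, norm_eq_abs] at hy
    have := abs_lt.1 ((abs_abs_sub_abs_le_abs_sub y x).trans_lt hy)
    constructor <;> linarith [this.1, this.2]
  rw [← intervalIntegral.integral_const_mul]
  refine (intervalIntegral.hasDerivAt_integral_of_dominated_loc_of_deriv_le
    (F' := fun y τ => -(y / 2) * shuKernel (s + 1) y τ) (bound := fun _ => 3 * |x| / 4 * C)
    hball ?_ (intervalIntegrable_shuKernel s hx ht) ?_ ?_ intervalIntegrable_const ?_).2
  · filter_upwards with y
    rw [hIoc]
    exact (continuousOn_shuKernel s y).mono Ioc_subset_Ioi_self |>.aestronglyMeasurable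
      measurableSet_Ioc
  · rw [hIoc]
    exact (continuousOn_const.mul (continuousOn_shuKernel (s + 1) x)).mono Ioc_subset_Ioi_self
      |>.aestronglyMeasurable measurableSet_Ioc
  · filter_upwards with τ hτ y hy
    rw [hIoc] at hτ
    obtain ⟨hy₁, hy₂⟩ := habs hy
    rw [norm_mul, norm_neg, norm_div, norm_of_nonneg (shuKernel_nonneg _ y hτ.1)]
    simp only [norm_eq_abs, abs_two]
    exact mul_le_mul (by linarith) (hC y τ hy₁ hτ) (shuKernel_nonneg _ y hτ.1) (by positivity)
  · filter_upwards with τ hτ y _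
    rw [hIoc] at hτ
    exact hasDerivAt_shuKernel s hτ.1.ne' y

lemma shu_div_rpow (ν : ℝ) {x : ℝ} (hx : 0 < x) (t : ℝ) :
    shu ν x t / x ^ ν = (1 / 2) ^ (ν + 1) * ∫ τ in (0:ℝ)..t, shuKernel ν x τ := by
  have hxν : x ^ ν ≠ 0 := (rpow_pos_of_pos hx ν).ne'
  change (1 / 2) * (x / 2) ^ ν * (∫ τ in (0:ℝ)..t, shuKernel ν x τ) / x ^ ν = _
  rw [div_eq_mul_one_div x, mul_rpow hx.le (by norm_num), rpow_add_one (by norm_num)]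
  field_simp

lemma hasDerivAt_shu_div_rpow (ν : ℝ) {x t : ℝ} (hx : 0 < x) (ht : 0 ≤ t) :
    HasDerivAt (fun y => shu ν y t / y ^ ν) (-x * (shu (ν + 1) x t / x ^ (ν + 1))) x := by
  have hshu : (fun y => shu ν y t / y ^ ν)
      =ᶠ[nhds x] fun y => (1 / 2) ^ (ν + 1) * ∫ τ in (0:ℝ)..t, shuKernel ν y τ := by
    filter_upwards [Ioi_mem_nhds hx] with y hy using shu_div_rpow ν hy t
  refine ((hasDerivAt_integral_shuKernel ν hx.ne' ht).const_mul _).congr_of_eventuallyEq hshu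
    |>.congr_deriv ?_
  rw [shu_div_rpow _ hx, rpow_add_one (by norm_num) (ν + 1)]
  ring

theorem stmt_10 (ν : ℝ) (k : ℕ) (x t : ℝ) (hx : 0 < x) (ht : 0 < t) :
    (fun f : ℝ → ℝ => fun y => (1/y) * deriv f y)^[k]
        (fun y => shu ν y t / y ^ ν) x
      = (-1)^k * (shu (ν + (k:ℝ)) x t / x ^ (ν + (k:ℝ))) := by
  induction k generalizing x with
  | zero => simp
  | succ k ih =>
    have hiter : (fun f : ℝ → ℝ => fun y => (1/y) * deriv f y)^[k] (fun y => shu ν y t / y ^ ν)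
        =ᶠ[nhds x] fun y => (-1) ^ k * (shu (ν + k) y t / y ^ (ν + k)) := by
      filter_upwards [Ioi_mem_nhds hx] with y hy using ih y hy
    rw [Function.iterate_succ_apply', hiter.deriv_eq,
      ((hasDerivAt_shu_div_rpow (ν + k) hx ht.le).const_mul _).deriv,
      Nat.cast_succ, ← add_assoc, pow_succ]
    field_simp
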